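/- arXiv:0906.2995 — 2 statements merged into one kernel-verified Lean document; each statement's English description precedes it below -/
import Mathlib

section
/- Every monomial A₁*a₁ ⋯ A_k*a_k A_{k+1}^∞ is open in the alphabetic topology on Γ^∞. -/
namespace InfWords

variable {Γ : Type}

/-- Finite and infinite words over `Γ`: `Γ^∞ = Γ* ∪ Γ^ω`. -/
abbrev Word (Γ : Type) := List Γ ⊕ (ℕ → Γ)

/-- Prepend a finite word to a finite or infinite word. -/
def wappend (u : List Γ) : Word Γ → Word Γ
  | Sum.inl v => Sum.inl (u ++ v)
  | Sum.inr f => Sum.inr fun n => if h : n < u.length then u.get ⟨n, h⟩ else f (n - u.length)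

/-- The set of finite words `Γ*` inside `Γ^∞`. -/
def finWords (Γ : Type) : Set (Word Γ) := Set.range Sum.inl

/-- The set of infinite words `Γ^ω` inside `Γ^∞`. -/
def infWords (Γ : Type) : Set (Word Γ) := Set.range Sum.inr

/-- The alphabet of a word: the letters occurring in it. -/
def alph : Word Γ → Set Γ
  | Sum.inl u => {a | a ∈ u}
  | Sum.inr f => {a | ∃ n, f n = a}

/-- The imaginary part: letters occurring infinitely often. -/
def im : Word Γ → Set Γ
  | Sum.inl _ => ∅
  | Sum.inr f => {a | ∀ n, ∃ m, n ≤ m ∧ f m = a}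

/-- `A^∞`: words all of whose letters lie in `A`. -/
def infin (A : Set Γ) : Set (Word Γ) := {α | alph α ⊆ A}

/-- The basic set `u A^∞` of the alphabetic topology. -/
def cone (u : List Γ) (A : Set Γ) : Set (Word Γ) := wappend u '' infin A

/-- The alphabetic topology on `Γ^∞`, generated by the sets `u A^∞`. -/
instance alphTop : TopologicalSpace (Word Γ) :=
  TopologicalSpace.generateFrom {S | ∃ u A, S = cone u A}

/-- `cpx A`: words with `alph = im = A`. -/
def cpx (A : Set Γ) : Set (Word Γ) := {β | alph β = A ∧ im β = A}

/-- The strict alphabetic topology, generated by the sets `u · cpx A`. -/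
def strictTopo (Γ : Type) : TopologicalSpace (Word Γ) :=
  TopologicalSpace.generateFrom {S | ∃ u A, S = wappend u '' cpx A}

/-- `u` is a finite prefix of the word `α`. -/
def IsPre (u : List Γ) : Word Γ → Prop
  | Sum.inl v => u <+: v
  | Sum.inr f => ∀ i : Fin u.length, u.get i = f i.1

/-- The arrow language `→W`: every prefix extends to a prefix lying in `W`. -/
def arrow (W : Set (List Γ)) : Set (Word Γ) :=
  {α | ∀ u, IsPre u α → ∃ v, IsPre (u ++ v) α ∧ u ++ v ∈ W}

/-- The right quotient `L / A^∞`. -/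
def quotInf (L : Set (Word Γ)) (A : Set Γ) : Set (List Γ) :=
  {u | ∃ β ∈ infin A, wappend u β ∈ L}

/-- `A^im`: words whose set of letters occurring infinitely often is exactly `A`. -/
def imSet (A : Set Γ) : Set (Word Γ) := {α | im α = A}

/-- `z^ω`, with the convention `1^ω = 1`. -/
def omegaPow : List Γ → Word Γ
  | [] => Sum.inl []
  | a :: l => Sum.inr fun n => (a :: l).get ⟨n % (a :: l).length, Nat.mod_lt n (Nat.succ_pos _)⟩

/-- The partial products `u v₀ v₁ ⋯ v_{n-1}`. -/
def partialProd (u : List Γ) (v : ℕ → List Γ) (n : ℕ) : List Γ :=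
  u ++ ((List.range n).map v).flatten

/-- `α` is the (finite or infinite) product `u v₀ v₁ v₂ ⋯`, with convention `1^ω = 1`. -/
def IsInfProd (u : List Γ) (v : ℕ → List Γ) : Word Γ → Prop
  | Sum.inl w => (∀ n, partialProd u v n <+: w) ∧ ∃ n, partialProd u v n = w
  | Sum.inr f => (∀ n, IsPre (partialProd u v n) (Sum.inr f)) ∧
      ∀ k, ∃ n, k < (partialProd u v n).length

/-- `h : Γ* → M` is a monoid homomorphism. -/
structure IsHom {M : Type} [Monoid M] (h : List Γ → M) : Prop where
  map_one : h [] = 1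
  map_mul : ∀ u v, h (u ++ v) = h u * h v

/-- `[s][e]^ω`: products `u v₀ v₁ ⋯` with `h u = s` and `h vᵢ = e`. -/
def pairSet {M : Type} (h : List Γ → M) (s e : M) : Set (Word Γ) :=
  {α | ∃ u v, h u = s ∧ (∀ i, h (v i) = e) ∧ IsInfProd u v α}

/-- `(s, e)` is a linked pair. -/
def LinkedPair {M : Type} [Monoid M] (s e : M) : Prop := s * e = s ∧ e * e = e

/-- `h` strongly recognizes `L`. -/
def StronglyRecognizes {M : Type} [Monoid M] (h : List Γ → M) (L : Set (Word Γ)) : Prop :=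
  L = ⋃ (s : M) (e : M) (_ : LinkedPair s e ∧ (pairSet h s e ∩ L).Nonempty), pairSet h s e

/-- `L` is regular: strongly recognized by a surjective homomorphism onto a finite monoid. -/
def Regular (L : Set (Word Γ)) : Prop :=
  ∃ (M : Type) (i : Monoid M), Finite M ∧
    ∃ h : List Γ → M, @IsHom Γ M i h ∧ Function.Surjective h ∧ @StronglyRecognizes Γ M i h L

/-- `L` is deterministic. -/
def Deterministic (L : Set (Word Γ)) : Prop :=
  Regular L ∧ ∃ W : Set (List Γ), L ∩ infWords Γ = arrow W ∩ infWords Γ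

/-- The syntactic preorder `u ≤_L v`. -/
def synLe (L : Set (Word Γ)) (u v : List Γ) : Prop :=
  ∀ x y z : List Γ,
    (wappend (x ++ v ++ y) (omegaPow z) ∈ L → wappend (x ++ u ++ y) (omegaPow z) ∈ L) ∧
    (wappend x (omegaPow (v ++ y)) ∈ L → wappend x (omegaPow (u ++ y)) ∈ L)

/-- The syntactic congruence `u ≡_L v`. -/
def synEq (L : Set (Word Γ)) (u v : List Γ) : Prop := synLe L u v ∧ synLe L v u

/-- `[s][e]^ω` for syntactic classes represented by words `s`, `e`. -/
def pairSetSyn (L : Set (Word Γ)) (s e : List Γ) : Set (Word Γ) :=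
  {α | ∃ u v, synEq L u s ∧ (∀ i, synEq L (v i) e) ∧ IsInfProd u v α}

/-- `s` represents an element of `M_e` in the syntactic monoid of `L`:
`s` is a product of words each of which is a factor of (something equivalent to) `e`. -/
def InMe (L : Set (Word Γ)) (e s : List Γ) : Prop :=
  ∃ parts : List (List Γ), s = parts.flatten ∧ ∀ p ∈ parts, ∃ x y, synEq L (x ++ p ++ y) e

/-- Glue a factorization `u₁ a₁ u₂ a₂ ⋯ u_k a_k` into a single finite word. -/
def glue : List (List Γ) → List (Set Γ × Γ) → List Γ
  | x :: xs, p :: l => x ++ p.2 :: glue xs l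
  | _, _ => []

/-- `(us, β)` is a factorization of `α` as `u₁ a₁ ⋯ u_k a_k β` with `uᵢ ∈ Aᵢ*`, `β ∈ B^∞`. -/
def IsFactorization (l : List (Set Γ × Γ)) (B : Set Γ) (us : List (List Γ)) (β : Word Γ)
    (α : Word Γ) : Prop :=
  us.length = l.length ∧
  (∀ (i : ℕ) (h1 : i < us.length) (h2 : i < l.length),
    ∀ c ∈ us.get ⟨i, h1⟩, c ∈ (l.get ⟨i, h2⟩).1) ∧
  β ∈ infin B ∧ α = wappend (glue us l) β

/-- The monomial `A₁* a₁ ⋯ A_k* a_k B^∞`. -/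
def monomial (l : List (Set Γ × Γ)) (B : Set Γ) : Set (Word Γ) :=
  {α | ∃ us β, IsFactorization l B us β α}

/-- The monomial given by `(l, B)` is unambiguous. -/
def Unambiguous (l : List (Set Γ × Γ)) (B : Set Γ) : Prop :=
  ∀ α us β us' β', IsFactorization l B us β α → IsFactorization l B us' β' α →
    us = us' ∧ β = β'

/-- `L` is a polynomial: a finite union of monomials. -/
def IsPolynomial (L : Set (Word Γ)) : Prop :=
  ∃ ms : List (List (Set Γ × Γ) × Set Γ), L = {α | ∃ m ∈ ms, α ∈ monomial m.1 m.2}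

/-- The set of marker letters of a monomial. -/
def sndSet (l : List (Set Γ × Γ)) : Set Γ := {a | ∃ p ∈ l, p.2 = a}

/-- `M_e`: the submonoid generated by the factors of the idempotent `e`. -/
def Msub {M : Type} [Monoid M] (e : M) : Submonoid M :=
  Submonoid.closure {t | ∃ x y, x * t * y = e}

/-- The variety `DA`: `ese = e` for all idempotents `e` and all `s ∈ M_e`. -/
def IsDA (M : Type) [Monoid M] : Prop :=
  ∀ e : M, e * e = e → ∀ s ∈ Msub e, e * s * e = e

end InfWords

namespace InfWords

variable {Γ : Type}

theorem isOpen_cone (u : List Γ) (A : Set Γ) : IsOpen (cone u A) :=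
  TopologicalSpace.GenerateOpen.basic _ ⟨u, A, rfl⟩

theorem cone_glue_subset_monomial {l : List (Set Γ × Γ)} {B : Set Γ} {us : List (List Γ)}
    (hlen : us.length = l.length)
    (hmem : ∀ (i : ℕ) (h1 : i < us.length) (h2 : i < l.length),
      ∀ c ∈ us.get ⟨i, h1⟩, c ∈ (l.get ⟨i, h2⟩).1) :
    cone (glue us l) B ⊆ monomial l B := by
  rintro _ ⟨β, hβ, rfl⟩
  exact ⟨us, β, hlen, hmem, hβ, rfl⟩

end InfWords

theorem monomial_isOpen_general (Γ : Type) (l : List (Set Γ × Γ)) (B : Set Γ) :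
    IsOpen (InfWords.monomial l B) := by
  rw [isOpen_iff_forall_mem_open]
  rintro _ ⟨us, β, hlen, hmem, hβ, rfl⟩
  exact ⟨_, InfWords.cone_glue_subset_monomial hlen hmem, InfWords.isOpen_cone _ B, β, hβ, rfl⟩

theorem monomial_isOpen (Γ : Type) [Fintype Γ] (l : List (Set Γ × Γ)) (B : Set Γ) :
    IsOpen (InfWords.monomial l B) :=
  monomial_isOpen_general Γ l B
end

section
/- If L ⊆ Γ^∞ is a polynomial (a finite union of monomials A₁*a₁ ⋯ A_k*a_k A_{k+1}^∞), then every idempotent of the syntactic monoid Synt(L) is locally top: for every idempotent e and every s ∈ M_e, we have ese ≤_L e in the syntactic order. -/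
namespace InfWords

variable {Γ : Type}

/-!
Pick a word `W ≡ e` containing every letter of `e` and of `s`; this is possible because `s` is a
product of factors of words equivalent to `e`, and `e` is idempotent. A monomial
`A₁*a₁ ⋯ A_k*a_k B^∞` has only `k` marker letters, so in a member `x W^N y z^ω` with `N > k` some
copy of `W` contains no marker and lies inside a block `Aᵢ*` or the tail `B^∞`; inserting `s W`
right after it keeps the word in the monomial, and since `W^n ≡ e` the new word is equivalent to
`x e s e y z^ω`. In a member `x (W y)^ω` all markers lie in a prefix `x (W y)^k`, after which
every letter is in `B`, so the tail may be replaced by `(e s e y)^ω`; the `k` extra copies of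
`W y` are then removed one at a time with the finite case, since
`e s e y (e s e y)^ω = (e s e y)^ω`.
-/

theorem wappend_nil (α : Word Γ) : wappend [] α = α := by
  cases α <;> simp [wappend]

theorem wappend_append (u v : List Γ) (α : Word Γ) :
    wappend (u ++ v) α = wappend u (wappend v α) := by
  cases α with
  | inl w => simp [wappend]
  | inr f =>
    simp only [wappend, Sum.inr.injEq]
    funext n
    simp only [List.get_eq_getElem, List.length_append, List.getElem_append]
    split_ifs <;> first | rfl | omega | (congr 1; omega)

theorem wappend_inj {u u' : List Γ} {α α' : Word Γ} (h : wappend u α = wappend u' α')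
    (hlen : u.length = u'.length) : u = u' ∧ α = α' := by
  cases α <;> cases α' <;> simp only [wappend, Sum.inl.injEq, Sum.inr.injEq, reduceCtorEq] at h
  · obtain ⟨rfl, rfl⟩ := List.append_inj h hlen
    exact ⟨rfl, rfl⟩
  · refine ⟨List.ext_getElem hlen fun n h₁ h₂ => ?_, ?_⟩
    · simpa [h₁, h₂] using congrFun h n
    · congr 1
      funext n
      simpa [hlen] using congrFun h (u'.length + n)

theorem wappend_split {u v : List Γ} {α β : Word Γ} (h : wappend u α = wappend v β)
    (hlen : u.length ≤ v.length) : ∃ r, v = u ++ r ∧ α = wappend r β := by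
  rw [← List.take_append_drop u.length v, wappend_append] at h
  obtain ⟨hu, hα⟩ := wappend_inj h (by simp [hlen])
  exact ⟨v.drop u.length, by conv_lhs => rw [← List.take_append_drop u.length v, ← hu], hα⟩

theorem alph_wappend (u : List Γ) (α : Word Γ) :
    alph (wappend u α) = {a | a ∈ u} ∪ alph α := by
  cases α with
  | inl v => ext a; simp [wappend, alph]
  | inr f =>
    ext a
    simp only [wappend, alph, Set.mem_union, Set.mem_ofPred_eq]
    constructor
    · rintro ⟨n, rfl⟩
      split_ifs with h
      · exact Or.inl (List.get_mem _ _)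
      · exact Or.inr ⟨_, rfl⟩
    · rintro (h | ⟨n, rfl⟩)
      · obtain ⟨i, hi, rfl⟩ := List.getElem_of_mem h
        exact ⟨i, by simp [hi]⟩
      · exact ⟨u.length + n, by simp⟩

theorem alph_wappend_subset {u v : List Γ} (h : u ⊆ v) (α : Word Γ) :
    alph (wappend u α) ⊆ alph (wappend v α) := by
  rw [alph_wappend, alph_wappend]
  exact Set.union_subset_union_left _ fun a ha => h ha

theorem omegaPow_of_ne_nil {t : List Γ} (h : t ≠ []) :
    omegaPow t =
      Sum.inr fun n => t[n % t.length]'(Nat.mod_lt _ (List.length_pos_iff.mpr h)) := by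
  cases t with
  | nil => exact absurd rfl h
  | cons a l => rfl

theorem alph_omegaPow (t : List Γ) : alph (omegaPow t) = {a | a ∈ t} := by
  rcases eq_or_ne t [] with rfl | ht
  · simp [omegaPow, alph]
  ext a
  simp only [omegaPow_of_ne_nil ht, alph, Set.mem_ofPred_eq]
  constructor
  · rintro ⟨n, rfl⟩
    exact List.getElem_mem _
  · intro ha
    obtain ⟨i, hi, rfl⟩ := List.getElem_of_mem ha
    exact ⟨i, by simp [Nat.mod_eq_of_lt hi]⟩

theorem omegaPow_append (p t : List Γ) :
    omegaPow (p ++ t) = wappend p (omegaPow (t ++ p)) := by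
  rcases eq_or_ne p [] with rfl | hp
  · simp [wappend_nil]
  have hp₀ : 0 < p.length := List.length_pos_iff.mpr hp
  rw [omegaPow_of_ne_nil (by simp [hp]), omegaPow_of_ne_nil (by simp [hp])]
  simp only [wappend, Sum.inr.injEq, List.get_eq_getElem]
  funext n
  split_ifs with hn
  · simp only [List.length_append, Nat.mod_eq_of_lt (by omega : n < p.length + t.length)]
    exact List.getElem_append_left hn
  obtain ⟨r, hr⟩ : ∃ r, (n - p.length) % (t ++ p).length = r := ⟨_, rfl⟩
  have hr_lt : r < t.length + p.length := by
    rw [← hr, ← List.length_append]; exact Nat.mod_lt _ (by simp; omega)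
  have hmod : n % (p ++ t).length = (r + p.length) % (p.length + t.length) := by
    rw [← hr, List.length_append, List.length_append, Nat.add_comm t.length,
      Nat.mod_add_mod, Nat.sub_add_cancel (by omega)]
  simp only [hr]
  rcases lt_or_ge r t.length with hrt | hrt
  · have hidx : n % (p ++ t).length = p.length + r := by
      rw [hmod, Nat.mod_eq_of_lt (by omega), Nat.add_comm]
    simp only [hidx, List.getElem_append_right (Nat.le_add_right _ _),
      List.getElem_append_left hrt, Nat.add_sub_cancel_left]
  · have hidx : n % (p ++ t).length = r - t.length := by
      rw [hmod, Nat.mod_eq_sub_mod (by omega), Nat.mod_eq_of_lt (by omega)]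
      omega
    simp only [hidx, List.getElem_append_left (by omega : r - t.length < p.length),
      List.getElem_append_right hrt]

theorem omegaPow_eq_wappend_self (t : List Γ) : omegaPow t = wappend t (omegaPow t) := by
  simpa using omegaPow_append t []

theorem omegaPow_eq_wappend_replicate (t : List Γ) (k : ℕ) :
    omegaPow t = wappend (List.replicate k t).flatten (omegaPow t) := by
  induction k with
  | zero => simp [wappend_nil]
  | succ k ih =>
    rw [List.replicate_succ, List.flatten_cons, wappend_append, ← ih,
      ← omegaPow_eq_wappend_self]

theorem mem_monomial_nil {B : Set Γ} {α : Word Γ} : α ∈ monomial [] B ↔ alph α ⊆ B := by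
  constructor
  · rintro ⟨us, β, hlen, -, hβ, rfl⟩
    rw [List.eq_nil_of_length_eq_zero hlen]
    simpa [glue, wappend_nil, infin] using hβ
  · intro hα
    exact ⟨[], α, rfl, by simp, hα, by simp [glue, wappend_nil]⟩

theorem mem_monomial_cons {A B : Set Γ} {a : Γ} {l : List (Set Γ × Γ)} {α : Word Γ} :
    α ∈ monomial ((A, a) :: l) B ↔
      ∃ u, (∀ c ∈ u, c ∈ A) ∧ ∃ γ ∈ monomial l B, α = wappend (u ++ [a]) γ := by
  constructor
  · rintro ⟨_ | ⟨u, us⟩, β, hlen, hus, hβ, rfl⟩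
    · simp at hlen
    refine ⟨u, hus 0 (by simp) (by simp), wappend (glue us l) β,
      ⟨us, β, by simpa using hlen, fun i h₁ h₂ => ?_, hβ, rfl⟩, ?_⟩
    · simpa using hus (i + 1) (by simpa using h₁) (by simpa using h₂)
    · simp [glue, ← wappend_append]
  · rintro ⟨u, hu, γ, ⟨us, β, hlen, hus, hβ, rfl⟩, rfl⟩
    refine ⟨u :: us, β, by simpa using hlen, fun i h₁ h₂ => ?_, hβ,
      by simp [glue, ← wappend_append]⟩
    cases i with
    | zero => simpa using hu
    | succ i => simpa using hus i (by simpa using h₁) (by simpa using h₂)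

theorem mem_monomial_insert {W ins : List Γ} (hins : ins ⊆ W) {B : Set Γ}
    (l : List (Set Γ × Γ)) {N : ℕ} (hN : l.length < N) {x : List Γ} {τ : Word Γ}
    (h : wappend (x ++ (List.replicate N W).flatten) τ ∈ monomial l B) :
    ∃ i j, i + 1 + j = N ∧ wappend (x ++ (List.replicate (i + 1) W).flatten ++ ins ++
      (List.replicate j W).flatten) τ ∈ monomial l B := by
  induction l generalizing N x with
  | nil =>
    obtain ⟨N, rfl⟩ : ∃ M, N = M + 1 := ⟨N - 1, by omega⟩
    refine ⟨0, N, by omega, ?_⟩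
    rw [mem_monomial_nil] at h ⊢
    refine (alph_wappend_subset ?_ τ).trans h
    simp only [List.replicate_succ, List.flatten_cons, List.replicate_zero, List.flatten_nil,
      List.append_nil]
    intro c hc
    simp only [List.mem_append] at hc ⊢
    grind
  | cons Aa l ih =>
    obtain ⟨A, a⟩ := Aa
    obtain ⟨N, rfl⟩ : ∃ M, N = M + 1 := ⟨N - 1, by omega⟩
    obtain ⟨u, hu, γ, hγ, hxu⟩ := mem_monomial_cons.mp h
    rw [List.replicate_succ, List.flatten_cons, ← List.append_assoc, wappend_append] at hxu
    by_cases hlen : (x ++ W).length ≤ u.length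
    · rw [wappend_append u] at hxu
      obtain ⟨r, rfl, hr⟩ := wappend_split hxu hlen
      refine ⟨0, N, by omega, mem_monomial_cons.mpr ⟨x ++ W ++ ins ++ r, ?_, γ, hγ, ?_⟩⟩
      · intro c hc
        simp only [List.mem_append] at hc hu
        grind
      · simp [wappend_append, hr]
    · obtain ⟨r, hxr, rfl⟩ := wappend_split hxu.symm (by simp at hlen ⊢; omega)
      rw [← wappend_append] at hγ
      obtain ⟨i, j, hij, hmem⟩ := ih (by simpa using hN) hγ
      refine ⟨i + 1, j, by omega, mem_monomial_cons.mpr ⟨u, hu, _, hmem, ?_⟩⟩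
      rw [← wappend_append, List.replicate_succ, List.flatten_cons]
      simp only [← List.append_assoc, hxr]

theorem mem_monomial_replace_tail {P : List Γ} (hP : P ≠ []) {B : Set Γ}
    (l : List (Set Γ × Γ)) {x : List Γ} (h : wappend x (omegaPow P) ∈ monomial l B) :
    ∃ k, ∀ γ : Word Γ, alph γ ⊆ {b | b ∈ P} →
      wappend (x ++ (List.replicate k P).flatten) γ ∈ monomial l B := by
  induction l generalizing x with
  | nil =>
    refine ⟨0, fun γ hγ => ?_⟩
    rw [mem_monomial_nil, alph_wappend, alph_omegaPow] at h
    rw [mem_monomial_nil, List.replicate_zero, List.flatten_nil, List.append_nil, alph_wappend]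
    exact Set.union_subset (Set.subset_union_left.trans h)
      (hγ.trans (Set.subset_union_right.trans h))
  | cons Aa l ih =>
    obtain ⟨A, a⟩ := Aa
    obtain ⟨u, hu, γ₀, hγ₀, hxu⟩ := mem_monomial_cons.mp h
    -- unroll `P^ω` far enough to pass the marker `a`
    rw [omegaPow_eq_wappend_replicate P (u.length + 1), ← wappend_append] at hxu
    have hlen : (u ++ [a]).length ≤ (x ++ (List.replicate (u.length + 1) P).flatten).length := by
      have hP₀ := List.length_pos_iff.mpr hP
      simp only [List.length_append, List.length_singleton, List.length_flatten, List.map_replicate,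
        List.sum_replicate, smul_eq_mul]
      nlinarith
    obtain ⟨r, hxr, rfl⟩ := wappend_split hxu.symm hlen
    obtain ⟨k, hk⟩ := ih hγ₀
    refine ⟨u.length + 1 + k, fun γ hγ => mem_monomial_cons.mpr ⟨u, hu, _, hk γ hγ, ?_⟩⟩
    rw [List.replicate_add, List.flatten_append, ← List.append_assoc, hxr, List.append_assoc,
      wappend_append]

theorem IsPolynomial.exists_insert {L : Set (Word Γ)} (hL : IsPolynomial L) :
    ∃ K, ∀ N, K < N → ∀ W ins : List Γ, ins ⊆ W → ∀ x τ,
      wappend (x ++ (List.replicate N W).flatten) τ ∈ L →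
      ∃ i j, i + 1 + j = N ∧ wappend (x ++ (List.replicate (i + 1) W).flatten ++ ins ++
        (List.replicate j W).flatten) τ ∈ L := by
  obtain ⟨ms, rfl⟩ := hL
  refine ⟨(ms.map fun m => m.1.length).sum, fun N hN W ins hins x τ ⟨m, hm, hmem⟩ => ?_⟩
  have hmN : m.1.length < N := (List.le_sum_of_mem (List.mem_map_of_mem hm)).trans_lt hN
  obtain ⟨i, j, hij, h⟩ := mem_monomial_insert hins m.1 hmN hmem
  exact ⟨i, j, hij, m, hm, h⟩

theorem IsPolynomial.exists_replace_tail {L : Set (Word Γ)} (hL : IsPolynomial L)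
    {P : List Γ} (hP : P ≠ []) {x : List Γ} (h : wappend x (omegaPow P) ∈ L) :
    ∃ k, ∀ γ : Word Γ, alph γ ⊆ {b | b ∈ P} →
      wappend (x ++ (List.replicate k P).flatten) γ ∈ L := by
  obtain ⟨ms, rfl⟩ := hL
  obtain ⟨m, hm, hmem⟩ := h
  obtain ⟨k, hk⟩ := mem_monomial_replace_tail hP m.1 hmem
  exact ⟨k, fun γ hγ => ⟨m, hm, hk γ hγ⟩⟩

section Syntactic

variable {L : Set (Word Γ)}

theorem synLe_refl (u : List Γ) : synLe L u u := fun _ _ _ => ⟨id, id⟩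

theorem synLe_trans {u v w : List Γ} (h₁ : synLe L u v) (h₂ : synLe L v w) : synLe L u w :=
  fun x y z => ⟨(h₁ x y z).1 ∘ (h₂ x y z).1, (h₁ x y z).2 ∘ (h₂ x y z).2⟩

theorem synLe_append_right {u v : List Γ} (h : synLe L u v) (q : List Γ) :
    synLe L (u ++ q) (v ++ q) := fun x y z => by
  simpa only [List.append_assoc] using h x (q ++ y) z

theorem synLe_append_left (p : List Γ) {u v : List Γ} (h : synLe L u v) :
    synLe L (p ++ u) (p ++ v) := fun x y z => by
  have hrot : ∀ w, wappend x (omegaPow (p ++ w ++ y)) =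
      wappend (x ++ p) (omegaPow (w ++ (y ++ p))) := fun w => by
    rw [List.append_assoc, omegaPow_append, wappend_append, List.append_assoc]
  refine ⟨?_, ?_⟩
  · simpa only [List.append_assoc] using (h (x ++ p) y z).1
  · simpa only [hrot] using (h (x ++ p) (y ++ p) z).2

theorem synLe_append {u₁ u₂ v₁ v₂ : List Γ} (h₁ : synLe L u₁ v₁) (h₂ : synLe L u₂ v₂) :
    synLe L (u₁ ++ u₂) (v₁ ++ v₂) :=
  synLe_trans (synLe_append_right h₁ u₂) (synLe_append_left v₁ h₂)

theorem synEq_trans {u v w : List Γ} (h₁ : synEq L u v) (h₂ : synEq L v w) : synEq L u w :=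
  ⟨synLe_trans h₁.1 h₂.1, synLe_trans h₂.2 h₁.2⟩

theorem synEq_append {u₁ u₂ v₁ v₂ : List Γ} (h₁ : synEq L u₁ v₁) (h₂ : synEq L u₂ v₂) :
    synEq L (u₁ ++ u₂) (v₁ ++ v₂) :=
  ⟨synLe_append h₁.1 h₂.1, synLe_append h₁.2 h₂.2⟩

variable {e : List Γ} (he : synEq L (e ++ e) e)
include he

theorem synEq_flatten_replicate {W : List Γ} (hW : synEq L W e) (n : ℕ) :
    synEq L (List.replicate (n + 1) W).flatten e := by
  induction n with
  | zero => simpa using hW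
  | succ n ih =>
    rw [List.replicate_succ, List.flatten_cons]
    exact synEq_trans (synEq_append hW ih) he

theorem InMe.exists_synEq_superset {s : List Γ} (hs : InMe L e s) :
    ∃ W, synEq L W e ∧ s ⊆ W ∧ e ⊆ W := by
  obtain ⟨parts, rfl, hparts⟩ := hs
  induction parts with
  | nil => exact ⟨e, ⟨synLe_refl e, synLe_refl e⟩, by simp, List.Subset.refl e⟩
  | cons p ps ih =>
    obtain ⟨W, hW, hpsW, heW⟩ := ih fun q hq => hparts q (List.mem_cons_of_mem p hq)
    obtain ⟨x, y, hxy⟩ := hparts p List.mem_cons_self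
    refine ⟨x ++ p ++ y ++ W, synEq_trans (synEq_append hxy hW) he, ?_,
      List.Subset.trans heW (List.subset_append_right _ W)⟩
    rw [List.flatten_cons]
    intro c hc
    simp only [List.mem_append] at hc ⊢
    grind

end Syntactic

section Polynomial

variable {L : Set (Word Γ)} (hpol : IsPolynomial L) {e s W : List Γ}
  (he : synEq L (e ++ e) e) (hW : synEq L W e) (hsW : s ⊆ W)
include hpol he hW hsW

theorem IsPolynomial.ese_mem_of_e_mem (x y z : List Γ)
    (h : wappend (x ++ e ++ y) (omegaPow z) ∈ L) :
    wappend (x ++ (e ++ s ++ e) ++ y) (omegaPow z) ∈ L := by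
  obtain ⟨K, hK⟩ := hpol.exists_insert
  have hWK : wappend (x ++ (List.replicate (K + 1) W).flatten) (wappend y (omegaPow z)) ∈ L := by
    rw [← wappend_append]
    exact ((synEq_flatten_replicate he hW K).1 x y z).1 h
  -- among `K + 1` copies of `W`, one is free of markers and can absorb `s W`
  obtain ⟨i, j, -, hins⟩ := hK (K + 1) K.lt_succ_self W (s ++ W)
    (List.append_subset.mpr ⟨hsW, List.Subset.refl W⟩) x _ hWK
  have hle : synLe L (e ++ s ++ e)
      ((List.replicate (i + 1) W).flatten ++ s ++ (List.replicate (j + 1) W).flatten) :=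
    synLe_append (synLe_append_right (synEq_flatten_replicate he hW i).2 s)
      (synEq_flatten_replicate he hW j).2
  apply (hle x y z).1
  rw [List.replicate_succ (n := j), List.flatten_cons]
  simpa only [List.append_assoc, wappend_append] using hins

theorem IsPolynomial.ese_omega_mem_of_e_omega_mem (heW : e ⊆ W) (x y : List Γ)
    (h : wappend x (omegaPow (e ++ y)) ∈ L) :
    wappend x (omegaPow (e ++ s ++ e ++ y)) ∈ L := by
  have hTP : e ++ s ++ e ++ y ⊆ W ++ y := by
    intro c hc
    simp only [List.mem_append] at hc ⊢
    grind
  have hWy : wappend x (omegaPow (W ++ y)) ∈ L := (hW.1 x y []).2 h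
  rcases eq_or_ne (W ++ y) [] with hP | hP
  · rw [hP] at hTP hWy
    rwa [List.subset_nil.mp hTP]
  obtain ⟨k, hk⟩ := hpol.exists_replace_tail hP hWy
  have hxk := hk (omegaPow (e ++ s ++ e ++ y)) (by rw [alph_omegaPow]; exact fun c hc => hTP hc)
  clear hk
  -- each extra copy of `W y` is turned into `e y`, then into `e s e y`, and absorbed by the tail
  induction k with
  | zero => simpa [wappend_nil] using hxk
  | succ k ih =>
    apply ih
    set xk := x ++ (List.replicate k (W ++ y)).flatten
    have hxk' : wappend (xk ++ W ++ y) (omegaPow (e ++ s ++ e ++ y)) ∈ L := by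
      rwa [List.replicate_succ', List.flatten_append, List.flatten_singleton,
        ← List.append_assoc, ← List.append_assoc] at hxk
    have hese := hpol.ese_mem_of_e_mem he hW hsW xk y _ ((hW.2 xk y _).1 hxk')
    rwa [List.append_assoc xk, wappend_append, ← omegaPow_eq_wappend_self] at hese

end Polynomial

end InfWords

theorem polynomial_idempotents_locally_top_general (Γ : Type)
    (L : Set (InfWords.Word Γ)) (hpol : InfWords.IsPolynomial L)
    (e : List Γ) (he : InfWords.synEq L (e ++ e) e)
    (s : List Γ) (hs : InfWords.InMe L e s) :
    InfWords.synLe L (e ++ s ++ e) e := by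
  obtain ⟨W, hW, hsW, heW⟩ := hs.exists_synEq_superset he
  exact fun x y z => ⟨hpol.ese_mem_of_e_mem he hW hsW x y z,
    hpol.ese_omega_mem_of_e_omega_mem he hW hsW heW x y⟩

theorem polynomial_idempotents_locally_top (Γ : Type) [Fintype Γ]
    (L : Set (InfWords.Word Γ)) (hpol : InfWords.IsPolynomial L)
    (e : List Γ) (he : InfWords.synEq L (e ++ e) e)
    (s : List Γ) (hs : InfWords.InMe L e s) :
    InfWords.synLe L (e ++ s ++ e) e :=
  polynomial_idempotents_locally_top_general Γ L hpol e he s hs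
end
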